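/- Let ℓ > 1 be a real number. Then for every ε > 0 and every real x ≥ 0, one has (x+1)^ℓ ≤ (1+ε)·x^ℓ + C_ε, where C_ε := (1+ε)·((1+ε)^{1/(ℓ-1)} − 1)^{−(ℓ-1)}. -/

import Mathlib

open Real

lemma mul_div_rpow_eq_rpow_one_sub_mul {t a : ℝ} (ht : 0 < t) (ha : 0 ≤ a) (p : ℝ) :
    t * (a / t) ^ p = t ^ (1 - p) * a ^ p := by
  rw [div_rpow ha ht.le, rpow_sub ht, rpow_one]
  field_simp

/-- Jensen's inequality for `y ↦ y ^ p` at the points `a / t` and `b / (1 - t)`. -/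
lemma add_rpow_le_rpow_one_sub_mul_add {p a b t : ℝ} (hp : 1 ≤ p) (ha : 0 ≤ a) (hb : 0 ≤ b)
    (ht₀ : 0 < t) (ht₁ : t < 1) :
    (a + b) ^ p ≤ t ^ (1 - p) * a ^ p + (1 - t) ^ (1 - p) * b ^ p := by
  have hs : 0 < 1 - t := sub_pos.2 ht₁
  have h := (convexOn_rpow hp).2 (Set.mem_Ici.2 (div_nonneg ha ht₀.le))
    (Set.mem_Ici.2 (div_nonneg hb hs.le)) ht₀.le hs.le (add_sub_cancel t 1)
  simp only [smul_eq_mul, mul_div_cancel₀ _ ht₀.ne', mul_div_cancel₀ _ hs.ne'] at h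
  rwa [mul_div_rpow_eq_rpow_one_sub_mul ht₀ ha, mul_div_rpow_eq_rpow_one_sub_mul hs hb] at h

theorem stmt0 (ℓ ε x : ℝ) (hℓ : 1 < ℓ) (hε : 0 < ε) (hx : 0 ≤ x) :
    (x + 1) ^ ℓ ≤ (1 + ε) * x ^ ℓ +
      (1 + ε) * ((1 + ε) ^ (1 / (ℓ - 1)) - 1) ^ (-(ℓ - 1)) := by
  set A : ℝ := (1 + ε) ^ (1 / (ℓ - 1))
  have hA : 1 < A := one_lt_rpow (by linarith) (by simpa using hℓ)
  have hA₀ : 0 < A := by linarith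
  have hAε : A ^ (ℓ - 1) = 1 + ε := by
    rw [← rpow_mul (by linarith), one_div_mul_cancel (by linarith), rpow_one]
  have hinv : A⁻¹ ^ (1 - ℓ) = 1 + ε := by
    rw [inv_rpow hA₀.le, ← rpow_neg hA₀.le, neg_sub, hAε]
  have hcompl : (1 - A⁻¹) ^ (1 - ℓ) = (1 + ε) * (A - 1) ^ (-(ℓ - 1)) := by
    rw [← hinv, neg_sub, ← mul_rpow (by positivity) (by linarith)]
    congr 1
    field_simp
  simpa [hinv, hcompl] using
    add_rpow_le_rpow_one_sub_mul_add hℓ.le hx zero_le_one (inv_pos.2 hA₀) (inv_lt_one_of_one_lt₀ hA)
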